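/- arXiv:math/0603473 — 3 statements merged into one kernel-verified Lean document; each statement's English description precedes it below -/
import Mathlib

section
/- Let X be a scheme over Spec A, where (A, 𝔪) is a Noetherian local ring that is 𝔪-adically complete. If ξ and ξ' are two sections of X → Spec A whose restrictions to Spec(A/𝔪^{n+1}) agree for all n ≥ 0, then ξ = ξ'. -/
open AlgebraicGeometry CategoryTheory

/-- Over a complete Noetherian local ring `A`, two sections of `X ⟶ Spec A` agreeing on
all the infinitesimal neighbourhoods `Spec (A/𝔪^(n+1))` are equal. -/
theorem section_ext_of_truncations
    {A : Type} [CommRing A] [IsLocalRing A] [IsNoetherianRing A]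
    [IsAdicComplete (IsLocalRing.maximalIdeal A) A]
    {X : Scheme} (f : X ⟶ Spec (CommRingCat.of A))
    (ξ ξ' : Spec (CommRingCat.of A) ⟶ X)
    (hξ : ξ ≫ f = 𝟙 _) (hξ' : ξ' ≫ f = 𝟙 _)
    (h : ∀ n : ℕ,
      Spec.map (CommRingCat.ofHom
          (Ideal.Quotient.mk (IsLocalRing.maximalIdeal A ^ (n + 1)))) ≫ ξ =
      Spec.map (CommRingCat.ofHom
          (Ideal.Quotient.mk (IsLocalRing.maximalIdeal A ^ (n + 1)))) ≫ ξ') :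
    ξ = ξ' := by
  classical
  set 𝔪 := IsLocalRing.maximalIdeal A with h𝔪
  -- the closed point of Spec A
  let c : Spec (CommRingCat.of A) := IsLocalRing.closedPoint A
  -- the two sections agree at the closed point
  have hm1 : (𝔪 ^ (0 + 1) : Ideal A) ≠ ⊤ := by
    simpa using (IsLocalRing.maximalIdeal.isMaximal A).ne_top
  haveI : Nontrivial (A ⧸ (𝔪 ^ (0 + 1) : Ideal A)) :=
    Ideal.Quotient.nontrivial_iff.mpr hm1
  obtain ⟨q⟩ : Nonempty (PrimeSpectrum (A ⧸ (𝔪 ^ (0 + 1) : Ideal A))) := inferInstance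
  have hq : (Spec.map (CommRingCat.ofHom
      (Ideal.Quotient.mk (𝔪 ^ (0 + 1))))).base q = c := by
    show PrimeSpectrum.comap (Ideal.Quotient.mk (𝔪 ^ (0 + 1))) q
      = IsLocalRing.closedPoint A
    have h1 : (PrimeSpectrum.comap (Ideal.Quotient.mk (𝔪 ^ (0 + 1))) q).asIdeal = 𝔪 := by
      refine le_antisymm
        (IsLocalRing.le_maximalIdeal
          (PrimeSpectrum.comap (Ideal.Quotient.mk (𝔪 ^ (0 + 1))) q).2.ne_top) ?_
      intro a ha
      show Ideal.Quotient.mk _ a ∈ q.asIdeal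
      have h0 : Ideal.Quotient.mk (𝔪 ^ (0 + 1)) a = 0 := by
        rw [Ideal.Quotient.eq_zero_iff_mem]
        simpa using ha
      rw [h0]
      exact q.asIdeal.zero_mem
    exact PrimeSpectrum.ext h1
  have hclosed : ξ'.base c = ξ.base c := by
    have := congrArg
      (fun g : Spec (CommRingCat.of (A ⧸ (𝔪 ^ (0 + 1) : Ideal A))) ⟶ X => g.base q) (h 0)
    simp only [Scheme.Hom.comp_apply] at this ⊢
    change ξ.base ((Spec.map (CommRingCat.ofHom (Ideal.Quotient.mk (𝔪 ^ (0 + 1))))).base q) =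
      ξ'.base ((Spec.map (CommRingCat.ofHom (Ideal.Quotient.mk (𝔪 ^ (0 + 1))))).base q) at this
    rw [hq] at this
    exact this.symm
  -- choose an affine open around the image of the closed point
  obtain ⟨_, ⟨U, hU, rfl⟩, hxU, -⟩ :=
    X.isBasis_affineOpens.exists_subset_of_mem_open
      (Set.mem_univ (ξ.base c)) isOpen_univ
  -- both sections land in U
  have hrange : ∀ (η : Spec (CommRingCat.of A) ⟶ X), η.base c ∈ U →
      Set.range η.base ⊆ Set.range (Scheme.Opens.ι U).base := by
    intro η hη
    rw [Scheme.Opens.range_ι]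
    rintro _ ⟨p, rfl⟩
    have hspec : η.base p ⤳ η.base c :=
      (IsLocalRing.specializes_closedPoint (R := A) p).map η.base.hom.2
    exact hspec.mem_open U.2 hη
  have hr : Set.range ξ.base ⊆ Set.range (Scheme.Opens.ι U).base := hrange ξ hxU
  have hr' : Set.range ξ'.base ⊆ Set.range (Scheme.Opens.ι U).base :=
    hrange ξ' (hclosed ▸ hxU)
  -- lift to U
  let y := IsOpenImmersion.lift (Scheme.Opens.ι U) ξ hr
  let y' := IsOpenImmersion.lift (Scheme.Opens.ι U) ξ' hr'
  have hy : y ≫ Scheme.Opens.ι U = ξ := IsOpenImmersion.lift_fac _ ξ hr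
  have hy' : y' ≫ Scheme.Opens.ι U = ξ' := IsOpenImmersion.lift_fac _ ξ' hr'
  haveI : IsAffine (Scheme.Opens.toScheme U) := hU
  -- turn into ring maps
  let φ := Spec.preimage (y ≫ (Scheme.Opens.toScheme U).isoSpec.hom)
  let φ' := Spec.preimage (y' ≫ (Scheme.Opens.toScheme U).isoSpec.hom)
  have hφ : Spec.map φ = y ≫ (Scheme.Opens.toScheme U).isoSpec.hom := Spec.map_preimage _
  have hφ' : Spec.map φ' = y' ≫ (Scheme.Opens.toScheme U).isoSpec.hom := Spec.map_preimage _
  have key : φ = φ' := by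
    ext r
    have hmem : ∀ n : ℕ, φ r - φ' r ∈ (𝔪 ^ (n + 1) : Ideal A) := by
      intro n
      have h1 : Spec.map (CommRingCat.ofHom (Ideal.Quotient.mk (𝔪 ^ (n + 1)))) ≫ y =
          Spec.map (CommRingCat.ofHom (Ideal.Quotient.mk (𝔪 ^ (n + 1)))) ≫ y' := by
        rw [← cancel_mono (Scheme.Opens.ι U)]
        simp only [Category.assoc, hy, hy']
        exact h n
      have h2 : Spec.map (φ ≫ CommRingCat.ofHom (Ideal.Quotient.mk (𝔪 ^ (n + 1)))) =
          Spec.map (φ' ≫ CommRingCat.ofHom (Ideal.Quotient.mk (𝔪 ^ (n + 1)))) := by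
        rw [Spec.map_comp, Spec.map_comp, hφ, hφ', ← Category.assoc, ← Category.assoc, h1]
      have h3 := Spec.map_injective h2
      have h4 := ConcreteCategory.congr_hom h3 r
      simp only [CommRingCat.comp_apply, CommRingCat.ofHom_apply] at h4
      exact (Ideal.Quotient.mk_eq_mk_iff_sub_mem _ _).mp h4
    have hz := IsHausdorff.haus (IsAdicComplete.toIsHausdorff (I := 𝔪) (M := A))
      (φ r - φ' r) ?_
    · exact sub_eq_zero.mp hz
    · intro n
      rw [SModEq.zero]
      cases n with
      | zero => simp
      | succ m =>
        have : (𝔪 ^ (m + 1) : Ideal A) • (⊤ : Submodule A A) = (𝔪 ^ (m + 1) : Ideal A) := by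
          rw [Ideal.smul_top_eq_map]
          ext a
          simp
        rw [this]
        exact hmem m
  have hyy : y = y' := by
    have := congrArg Spec.map key
    rw [hφ, hφ'] at this
    exact (cancel_mono (Scheme.Opens.toScheme U).isoSpec.hom).mp this
  rw [← hy, ← hy', hyy]
end

section
/- Let (A, 𝔪) be a complete Noetherian local ring and X a scheme over Spec A. The natural map Hilb^1_X(A) → lim_n Hilb^1_X(A/𝔪^{n+1}) is injective. -/
open AlgebraicGeometry CategoryTheory CategoryTheory.Limits

private lemma quotient_mk_isLocalHom {A : Type} [CommRing A] [IsLocalRing A]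
    (I : Ideal A) (hI : I ≠ ⊤) : IsLocalHom (Ideal.Quotient.mk I) := by
  constructor
  intro a ha
  by_contra hna
  have ham : a ∈ IsLocalRing.maximalIdeal A := hna
  obtain ⟨b, hb⟩ := Ideal.Quotient.mk_surjective (↑ha.unit⁻¹ : A ⧸ I)
  have h1 : Ideal.Quotient.mk I (a * b) = 1 := by
    rw [map_mul, hb]
    exact ha.mul_val_inv
  have h2 : a * b - 1 ∈ I := by
    have := Ideal.Quotient.eq.mp (h1.trans (map_one (Ideal.Quotient.mk I)).symm)
    simpa using this
  have h3 : a * b - 1 ∈ IsLocalRing.maximalIdeal A := IsLocalRing.le_maximalIdeal hI h2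
  have h4 : a * b ∈ IsLocalRing.maximalIdeal A := Ideal.mul_mem_right _ _ ham
  have : (1 : A) ∈ IsLocalRing.maximalIdeal A := by simpa using Ideal.sub_mem _ h4 h3
  exact (IsLocalRing.maximalIdeal.isMaximal A).ne_top
    (Ideal.eq_top_of_isUnit_mem _ this isUnit_one)

/-- The natural map `Hilb¹_X(A) → lim_n Hilb¹_X(A/𝔪^(n+1))` is injective for a complete
Noetherian local ring `A`: a closed section over `Spec A` is determined by its
truncations to the infinitesimal neighbourhoods `Spec (A/𝔪^(n+1))`. -/
theorem hilbOne_to_limit_injective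
    {A : Type} [CommRing A] [IsLocalRing A] [IsNoetherianRing A]
    [IsAdicComplete (IsLocalRing.maximalIdeal A) A]
    {X : Scheme} (f : X ⟶ Spec (CommRingCat.of A))
    (ξ ξ' : Spec (CommRingCat.of A) ⟶ X)
    (hξ : ξ ≫ f = 𝟙 _) (hξ' : ξ' ≫ f = 𝟙 _)
    (hcl : IsClosedImmersion ξ) (hcl' : IsClosedImmersion ξ')
    (h : ∀ n : ℕ,
      Spec.map (CommRingCat.ofHom
        (Ideal.Quotient.mk (IsLocalRing.maximalIdeal A ^ (n + 1)))) ≫ ξ =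
      Spec.map (CommRingCat.ofHom
        (Ideal.Quotient.mk (IsLocalRing.maximalIdeal A ^ (n + 1)))) ≫ ξ') :
    ξ = ξ' := by
  set 𝔪 := IsLocalRing.maximalIdeal A with h𝔪
  have hne : ∀ n : ℕ, (𝔪 ^ (n + 1)) ≠ ⊤ := fun n hn => by
    have : 𝔪 ^ (n+1) ≤ 𝔪 := Ideal.pow_le_self (Nat.succ_ne_zero n)
    exact (IsLocalRing.maximalIdeal.isMaximal A).ne_top (top_le_iff.mp (hn ▸ this))
  -- closed point of Spec A
  haveI : IsLocalRing ↑(CommRingCat.of A) := inferInstanceAs (IsLocalRing A)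
  let pt : Spec (CommRingCat.of A) := IsLocalRing.closedPoint A
  haveI : Nontrivial (A ⧸ 𝔪 ^ (0+1)) := Ideal.Quotient.nontrivial_iff.mpr (hne 0)
  haveI : IsLocalRing (A ⧸ 𝔪 ^ (0+1)) := .of_surjective' _ Ideal.Quotient.mk_surjective
  haveI := quotient_mk_isLocalHom (𝔪 ^ (0+1)) (hne 0)
  -- the truncation map at level 0 hits the closed point
  have hpt0 : (Spec.map (CommRingCat.ofHom
      (Ideal.Quotient.mk (𝔪 ^ (0 + 1))))).base
      (IsLocalRing.closedPoint (A ⧸ 𝔪 ^ (0 + 1))) = pt := by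
    exact IsLocalRing.comap_closedPoint (Ideal.Quotient.mk (𝔪 ^ (0+1)))
  -- the two sections agree at the closed point
  have hptξ : ξ.base pt = ξ'.base pt := by
    have := congrArg (fun g : Spec (CommRingCat.of (A ⧸ 𝔪 ^ (0+1))) ⟶ X =>
      g.base (IsLocalRing.closedPoint (A ⧸ 𝔪 ^ (0 + 1)))) (h 0)
    rw [← hpt0]; exact this
  -- choose an affine neighbourhood of the common image of the closed point
  obtain ⟨R, u, hu, hmem, -⟩ := Scheme.exists_affine_mem_range_and_range_subset
    (X := X) (x := ξ.base pt) (U := ⊤) trivial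
  -- both sections land inside the image of u
  have hrange : ∀ (ζ : Spec (CommRingCat.of A) ⟶ X), ζ.base pt ∈ Set.range u.base →
      Set.range ζ.base ⊆ Set.range u.base := by
    intro ζ hζ
    haveI : IsLocalRing ↑(CommRingCat.of A) := inferInstanceAs (IsLocalRing A)
    have : ζ ⁻¹ᵁ ⟨Set.range u.base, hu.base_open.isOpen_range⟩ = ⊤ :=
      (IsLocalRing.closedPoint_mem_iff (R := ↑(CommRingCat.of A)) _).mp hζ
    rintro - ⟨y, rfl⟩
    have hy : y ∈ ζ ⁻¹ᵁ ⟨Set.range u.base, hu.base_open.isOpen_range⟩ := this ▸ trivial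
    exact hy
  have hr : Set.range ξ.base ⊆ Set.range u.base := hrange ξ hmem
  have hr' : Set.range ξ'.base ⊆ Set.range u.base := hrange ξ' (hptξ ▸ hmem)
  -- lift along the open immersion u
  let g : Spec (CommRingCat.of A) ⟶ Spec R := IsOpenImmersion.lift u ξ hr
  let g' : Spec (CommRingCat.of A) ⟶ Spec R := IsOpenImmersion.lift u ξ' hr'
  have hg : g ≫ u = ξ := IsOpenImmersion.lift_fac u ξ hr
  have hg' : g' ≫ u = ξ' := IsOpenImmersion.lift_fac u ξ' hr'
  -- pass to ring maps
  let φ : R ⟶ CommRingCat.of A := Spec.preimage g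
  let φ' : R ⟶ CommRingCat.of A := Spec.preimage g'
  have hφ : Spec.map φ = g := Spec.map_preimage g
  have hφ' : Spec.map φ' = g' := Spec.map_preimage g'
  -- the ring maps agree modulo every power of the maximal ideal
  have key : ∀ n : ℕ, φ ≫ CommRingCat.ofHom (Ideal.Quotient.mk (𝔪 ^ (n+1))) =
      φ' ≫ CommRingCat.ofHom (Ideal.Quotient.mk (𝔪 ^ (n+1))) := by
    intro n
    apply Spec.map_injective
    rw [Spec.map_comp, Spec.map_comp, hφ, hφ']
    have := h n
    rw [← hg, ← hg', ← Category.assoc, ← Category.assoc] at this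
    exact (cancel_mono u).mp this
  -- hence they agree, by adic separatedness
  have hφφ' : φ = φ' := by
    ext r
    have hmem : ∀ n : ℕ, φ r - φ' r ∈ 𝔪 ^ (n+1) := fun n => by
      have := congrArg (fun ψ => ψ r) (key n)
      simp only [CommRingCat.comp_apply] at this
      exact Ideal.Quotient.eq.mp this
    have : φ r - φ' r = 0 := by
      refine IsHausdorff.haus (I := 𝔪) (inferInstanceAs (IsHausdorff 𝔪 A)) _ fun n => ?_
      cases n with
      | zero =>
        rw [smul_eq_mul]
        exact SModEq.zero.mpr (by simp [Ideal.one_eq_top])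
      | succ m =>
        rw [smul_eq_mul, Ideal.mul_top]
        exact SModEq.zero.mpr (hmem m)
    exact sub_eq_zero.mp this
  rw [← hg, ← hg', ← hφ, ← hφ', hφφ']
end

section
/- Let f : X → S be a morphism of schemes and suppose ξ, ξ' : Spec A → X are two distinct sections over Spec A (A a domain with fraction field K) that agree on the generic point Spec K. Then neither ξ nor ξ' is a closed immersion. -/
open AlgebraicGeometry CategoryTheory CategoryTheory.Limits

/-- A closed-immersion section over `Spec A` (`A` a domain) agreeing with another
section at the generic point equals that section. -/
lemma section_eq_of_isClosedImmersion_aux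
    {A : Type} [CommRing A] [IsDomain A] {P : Scheme}
    (π : P ⟶ Spec (CommRingCat.of A)) (σ σ' : Spec (CommRingCat.of A) ⟶ P)
    (hσ : σ ≫ π = 𝟙 _) (hσ' : σ' ≫ π = 𝟙 _)
    (hgen : Spec.map (CommRingCat.ofHom (algebraMap A (FractionRing A))) ≫ σ =
      Spec.map (CommRingCat.ofHom (algebraMap A (FractionRing A))) ≫ σ')
    [IsClosedImmersion σ] : σ = σ' := by
  let Z := pullback σ σ'
  let g : Z ⟶ Spec (CommRingCat.of A) := pullback.snd σ σ'
  have hci : IsClosedImmersion g := inferInstance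
  have hZ : IsAffine Z := by
    rw [@HasAffineProperty.iff_of_isAffine @IsClosedImmersion _ IsClosedImmersion.hasAffineProperty] at hci
    exact hci.left
  suffices hiso : IsIso g by
    have hfst : pullback.fst σ σ' = g := by
      have h1 : pullback.fst σ σ' ≫ σ ≫ π = pullback.snd σ σ' ≫ σ' ≫ π := by
        rw [← Category.assoc, ← Category.assoc, pullback.condition]
      rwa [hσ, hσ', Category.comp_id, Category.comp_id] at h1
    have hc := pullback.condition (f := σ) (g := σ')
    rw [hfst] at hc
    exact (cancel_epi g).mp hc
  suffices h : Function.Bijective (g.appTop) by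
    refine (@HasAffineProperty.iff_of_isAffine (MorphismProperty.isomorphisms Scheme) _ instHasAffinePropertyIsomorphismsSchemeAndIsAffineIsIsoCommRingCatAppTop).mpr ?_
    exact ⟨hZ, (ConcreteCategory.isIso_iff_bijective _).mpr h⟩
  constructor
  · let l : Spec (CommRingCat.of (FractionRing A)) ⟶ Z :=
      pullback.lift (Spec.map (CommRingCat.ofHom (algebraMap A (FractionRing A))))
        (Spec.map (CommRingCat.ofHom (algebraMap A (FractionRing A)))) hgen
    have hg : l ≫ g = Spec.map (CommRingCat.ofHom (algebraMap A (FractionRing A))) :=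
      pullback.lift_snd _ _ _
    have : Function.Injective ((l ≫ g).appTop) := by
      rw [hg]
      let e := arrowIsoΓSpecOfIsAffine (CommRingCat.ofHom <| algebraMap A (FractionRing A))
      let P : MorphismProperty CommRingCat :=
        RingHom.toMorphismProperty <| fun f ↦ Function.Injective f
      have : (RingHom.toMorphismProperty <| fun f ↦ Function.Injective f).RespectsIso :=
        RingHom.toMorphismProperty_respectsIso_iff.mp RingHom.injective_respectsIso
      show P _
      rw [← MorphismProperty.arrow_mk_iso_iff (P := P) e]
      exact FaithfulSMul.algebraMap_injective A (FractionRing A)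
    rw [Scheme.Hom.comp_appTop] at this
    exact Function.Injective.of_comp this
  · rw [@HasAffineProperty.iff_of_isAffine @IsClosedImmersion _ IsClosedImmersion.hasAffineProperty] at hci
    exact hci.right

/-- If two distinct sections `ξ, ξ' : Spec A ⟶ X` over `S` (with `A` a domain) agree on
the generic point `Spec K`, then neither of them is a closed section, i.e. neither of
the induced sections `Spec A ⟶ X ×_S Spec A` is a closed immersion. -/
theorem sections_agreeing_generically_not_closed
    {X S : Scheme} (f : X ⟶ S)
    {A : Type} [CommRing A] [IsDomain A]
    (s : Spec (CommRingCat.of A) ⟶ S)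
    (ξ ξ' : Spec (CommRingCat.of A) ⟶ X)
    (hξ : ξ ≫ f = 𝟙 _ ≫ s) (hξ' : ξ' ≫ f = 𝟙 _ ≫ s)
    (hne : ξ ≠ ξ')
    (hgen : Spec.map (CommRingCat.ofHom (algebraMap A (FractionRing A))) ≫ ξ =
      Spec.map (CommRingCat.ofHom (algebraMap A (FractionRing A))) ≫ ξ') :
    ¬ IsClosedImmersion (pullback.lift ξ (𝟙 _) hξ) ∧
    ¬ IsClosedImmersion (pullback.lift ξ' (𝟙 _) hξ') := by
  have hg : Spec.map (CommRingCat.ofHom (algebraMap A (FractionRing A))) ≫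
        pullback.lift ξ (𝟙 _) hξ =
      Spec.map (CommRingCat.ofHom (algebraMap A (FractionRing A))) ≫
        pullback.lift ξ' (𝟙 _) hξ' := by
    apply pullback.hom_ext <;> simp only [Category.assoc, pullback.lift_fst, pullback.lift_snd, hgen]
  constructor
  · intro h
    apply hne
    have := section_eq_of_isClosedImmersion_aux (pullback.snd f s)
      (pullback.lift ξ (𝟙 _) hξ) (pullback.lift ξ' (𝟙 _) hξ')
      (pullback.lift_snd _ _ _) (pullback.lift_snd _ _ _) hg
    calc ξ = pullback.lift ξ (𝟙 _) hξ ≫ pullback.fst f s := (pullback.lift_fst _ _ _).symm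
    _ = pullback.lift ξ' (𝟙 _) hξ' ≫ pullback.fst f s := by rw [this]
    _ = ξ' := pullback.lift_fst _ _ _
  · intro h
    apply hne
    have := section_eq_of_isClosedImmersion_aux (pullback.snd f s)
      (pullback.lift ξ' (𝟙 _) hξ') (pullback.lift ξ (𝟙 _) hξ)
      (pullback.lift_snd _ _ _) (pullback.lift_snd _ _ _) hg.symm
    calc ξ = pullback.lift ξ (𝟙 _) hξ ≫ pullback.fst f s := (pullback.lift_fst _ _ _).symm
    _ = pullback.lift ξ' (𝟙 _) hξ' ≫ pullback.fst f s := by rw [this]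
    _ = ξ' := pullback.lift_fst _ _ _
end
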